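/- The category Dir of Dirichlet functors (the full subcategory of the functor category FintypeCatᵒᵖ ⥤ FintypeCat spanned by finite coproducts of representable presheaves) is equivalent to the arrow category of FintypeCat. An equivalence is given by sending a Dirichlet functor D to the function D(0!) : D(1) → D(0) induced by the unique map 0 → 1. -/

import Mathlib

/- STATEMENT 5: The category `Dir` of Dirichlet functors (the full subcategory of
`FintypeCatᵒᵖ ⥤ FintypeCat` spanned by finite coproducts of representable presheaves) is
equivalent to the arrow category of `FintypeCat`. An equivalence is given by sending a
Dirichlet functor `D` to the function `D(0!) : D(1) → D(0)`. -/

open CategoryTheory CategoryTheory.Limits Opposite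

noncomputable section

noncomputable instance (X Y : FintypeCat.{0}) : Fintype (X ⟶ Y) := by
  classical
  haveI : Fintype X := Fintype.ofFinite X
  haveI : Fintype Y := Fintype.ofFinite Y
  exact Fintype.ofEquiv (X → Y) ⟨FintypeCat.homMk, fun f x => f x, fun _ => rfl,
    fun f => FintypeCat.hom_ext _ _ (fun _ => rfl)⟩

/-- The finite coproduct `∐ᵢ Fin(–, dᵢ)` of representable presheaves `FintypeCatᵒᵖ ⥤ FintypeCat`. -/
def dirichletSum {I : Type} [Fintype I] (d : I → FintypeCat.{0}) :
    FintypeCat.{0}ᵒᵖ ⥤ FintypeCat.{0} where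
  obj X := FintypeCat.of (Σ i, (X.unop ⟶ d i))
  map f := FintypeCat.homMk fun x => ⟨x.1, f.unop ≫ x.2⟩

/-- A Dirichlet functor is a finite coproduct of representable presheaves. -/
def IsDirichlet (D : FintypeCat.{0}ᵒᵖ ⥤ FintypeCat.{0}) : Prop :=
  ∃ (I : Type) (_ : Fintype I) (d : I → FintypeCat.{0}), Nonempty (D ≅ dirichletSum d)

/-- The category of Dirichlet functors. -/
abbrev Dir := ObjectProperty.FullSubcategory IsDirichlet

/-- The empty finite set `0`. -/
abbrev X0 : FintypeCat.{0} := FintypeCat.of PEmpty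

/-- A one-element finite set `1`. -/
abbrev X1 : FintypeCat.{0} := FintypeCat.of PUnit

/-- The unique function `0! : 0 → 1`. -/
def zeroToOne : X0 ⟶ X1 := FintypeCat.homMk fun x => x.elim


/-! By naturality, a transformation into `∐ⱼ Fin(–, eⱼ)` is determined by its components at `0`
and `1`: an element `⟨j, g⟩` of `∐ⱼ Fin(Y, eⱼ)` is recovered from its restriction to `0`, which
remembers `j`, together with its restrictions along the points `1 → Y`, which remember `g`.
Conversely, a commutative square from `D(0!)` to `E(0!)`, where `D = ∐ᵢ Fin(–, dᵢ)`, sends the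
summand `i` to a summand `p i` that can be read off at `0`, and is pointwise a function
`dᵢ → e_{p i}`; these assemble into a transformation `D ⟶ E`. Finally every function `f : A → B`
is, up to isomorphism, the value at `0!` of `∐_{b ∈ B} Fin(–, f⁻¹(b))`. -/

namespace FintypeCat

instance (Y : FintypeCat.{0}) : Unique (X0 ⟶ Y) where
  default := homMk PEmpty.elim
  uniq _ := hom_ext _ _ nofun

def pointEquiv (Y : FintypeCat.{0}) : (X1 ⟶ Y) ≃ Y where
  toFun k := k PUnit.unit
  invFun y := homMk fun _ => y
  left_inv _ := hom_ext _ _ fun _ => rfl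
  right_inv _ := rfl

end FintypeCat

open FintypeCat

lemma CategoryTheory.Functor.map_bijective_of_iso {C D : Type*} [Category* C] [Category* D]
    (F : C ⥤ D) {X X' Y Y' : C} (α : X ≅ X') (β : Y ≅ Y')
    (h : Function.Bijective (F.map : (X' ⟶ Y') → _)) :
    Function.Bijective (F.map : (X ⟶ Y) → _) := by
  have : (F.map : (X ⟶ Y) → _) =
      ((F.mapIso α).homCongr (F.mapIso β)).symm ∘ F.map ∘ α.homCongr β := by
    funext f
    simp
  rw [this]
  exact (Equiv.bijective _).comp (h.comp (Equiv.bijective _))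

def evalZeroToOne : (FintypeCat.{0}ᵒᵖ ⥤ FintypeCat.{0}) ⥤ Arrow FintypeCat.{0} where
  obj D := Arrow.mk (D.map zeroToOne.op)
  map α := Arrow.homMk (α.app _) (α.app _) (α.naturality _).symm

section DirichletSum

variable {I J : Type} [Fintype I] [Fintype J] {d : I → FintypeCat.{0}} {e : J → FintypeCat.{0}}

variable (d) in
lemma isDirichlet_dirichletSum : IsDirichlet (dirichletSum d) :=
  ⟨I, inferInstance, d, ⟨Iso.refl _⟩⟩

lemma dirichletSum_obj_ext {Y : FintypeCat.{0}} {s t : (dirichletSum d).obj (op Y)}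
    (h0 : (dirichletSum d).map (default : X0 ⟶ Y).op s =
      (dirichletSum d).map (default : X0 ⟶ Y).op t)
    (h1 : ∀ y, (dirichletSum d).map ((pointEquiv Y).symm y).op s =
      (dirichletSum d).map ((pointEquiv Y).symm y).op t) :
    s = t := by
  obtain ⟨i, g⟩ := s
  obtain ⟨j, g'⟩ := t
  obtain rfl : i = j := congrArg Sigma.fst h0
  refine congrArg (Sigma.mk i) (hom_ext _ _ fun y => ?_)
  exact congrArg (fun k => k PUnit.unit) (eq_of_heq (Sigma.mk.inj (h1 y)).2)

lemma dirichletSum_hom_ext {F : FintypeCat.{0}ᵒᵖ ⥤ FintypeCat.{0}} {α β : F ⟶ dirichletSum e}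
    (h1 : α.app (op X1) = β.app (op X1)) (h0 : α.app (op X0) = β.app (op X0)) : α = β := by
  ext Y s
  refine dirichletSum_obj_ext ?_ fun y => ?_
  · rw [← FunctorToFintypeCat.naturality, ← FunctorToFintypeCat.naturality, h0]
  · rw [← FunctorToFintypeCat.naturality, ← FunctorToFintypeCat.naturality, h1]

def dirichletSumMap (p : I → J) (h : ∀ i, d i ⟶ e (p i)) : dirichletSum d ⟶ dirichletSum e where
  app _ := homMk fun s => ⟨p s.1, s.2 ≫ h s.1⟩

lemma dirichletSum_obj_zero_ext {s t : (dirichletSum d).obj (op X0)} (h : s.1 = t.1) : s = t := by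
  obtain ⟨i, g⟩ := s
  obtain ⟨j, g'⟩ := t
  obtain rfl : i = j := h
  rw [Subsingleton.elim g g']

lemma evalZeroToOne_map_surjective :
    Function.Surjective (evalZeroToOne.map : (dirichletSum d ⟶ dirichletSum e) → _) := by
  intro sq
  let p (i : I) : J := (sq.right ⟨i, default⟩).1
  have fst_left (i : I) (k : X1 ⟶ d i) : (sq.left ⟨i, k⟩).1 = p i := by
    have := congrArg Sigma.fst (ConcreteCategory.congr_hom sq.w ⟨i, k⟩)
    exact this.trans (congrArg (fun s => (sq.right s).1) (dirichletSum_obj_zero_ext rfl))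
  have left_point (i : I) (x : d i) :
      ∃ y : e (p i), sq.left ⟨i, (pointEquiv _).symm x⟩ = ⟨p i, (pointEquiv _).symm y⟩ := by
    generalize hs : sq.left ⟨i, (pointEquiv _).symm x⟩ = s
    obtain ⟨j, g⟩ := s
    obtain rfl : j = p i := (congrArg Sigma.fst hs).symm.trans (fst_left i _)
    exact ⟨g PUnit.unit, congrArg (Sigma.mk (p i)) ((pointEquiv _).symm_apply_apply g).symm⟩
  choose h hh using left_point
  refine ⟨dirichletSumMap p fun i => homMk (h i), Arrow.hom_ext _ _ ?_ ?_⟩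
  · refine hom_ext _ _ fun ⟨i, k⟩ => ?_
    rw [← (pointEquiv _).symm_apply_apply k, hh]
    rfl
  · refine hom_ext _ _ fun ⟨i, k⟩ => dirichletSum_obj_zero_ext ?_
    rw [Subsingleton.elim k default]
    rfl

end DirichletSum

lemma evalZeroToOne_map_bijective_of_isDirichlet {D E : FintypeCat.{0}ᵒᵖ ⥤ FintypeCat.{0}}
    (hD : IsDirichlet D) (hE : IsDirichlet E) :
    Function.Bijective (evalZeroToOne.map : (D ⟶ E) → _) := by
  obtain ⟨I, _, d, ⟨φ⟩⟩ := hD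
  obtain ⟨J, _, e, ⟨ψ⟩⟩ := hE
  refine evalZeroToOne.map_bijective_of_iso φ ψ ⟨fun α β h => ?_, evalZeroToOne_map_surjective⟩
  exact dirichletSum_hom_ext (congrArg Arrow.Hom.left h) (congrArg Arrow.Hom.right h)

def fibers {A B : FintypeCat.{0}} (f : A ⟶ B) (b : B) : FintypeCat.{0} :=
  FintypeCat.of {a // f a = b}

attribute [local instance] FintypeCat.fintype in
def evalZeroToOneFibersIso (f : Arrow FintypeCat.{0}) :
    evalZeroToOne.obj (dirichletSum (fibers f.hom)) ≅ f :=
  Arrow.isoMk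
    (equivEquivIso ((Equiv.sigmaCongrRight fun _ => pointEquiv _).trans
      (Equiv.sigmaFiberEquiv f.hom)))
    (equivEquivIso (Equiv.sigmaUnique _ _))
    (hom_ext _ _ fun s => (s.2 PUnit.unit).2)

theorem dir_equivalence_arrow :
    ∃ F : Dir ⥤ Arrow FintypeCat.{0},
      (∀ D : Dir, F.obj D = Arrow.mk (D.obj.map zeroToOne.op)) ∧ F.IsEquivalence := by
  obtain ⟨hF⟩ := (Functor.FullyFaithful.nonempty_iff_map_bijective
    (ObjectProperty.ι IsDirichlet ⋙ evalZeroToOne)).2 fun D E =>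
      (evalZeroToOne_map_bijective_of_isDirichlet D.property E.property).comp
        ((ObjectProperty.fullyFaithfulι _).map_bijective D E)
  refine ⟨_, fun _ => rfl,
    { faithful := hF.faithful, full := hF.full, essSurj := ⟨fun f => ?_⟩ }⟩
  let _ : Fintype f.right := FintypeCat.fintype
  exact ⟨⟨_, isDirichlet_dirichletSum (fibers f.hom)⟩, ⟨evalZeroToOneFibersIso f⟩⟩
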